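/- Assume good X. If fresh xs y X, then Abs xs x X = Abs xs y (X[(Var xs y)/x]_xs); that is, the bound variable of an abstraction can be renamed to any variable fresh for the body, via substitution. -/

import Mathlib

open scoped Classical

universe u

section Binding

variable (var varsort index bindex opsym : Type u)

/-! ### Inputs -/

/-- An `(α,β)`-input: a partial function from `α` to `β`. -/
abbrev Input (α β : Type u) : Type u := α → Option β

/-- The domain of an input. -/
def idom {α β : Type u} (inp : Input α β) : Set α := {a | inp a ≠ none}

/-- The componentwise lifting of a predicate to inputs. -/
def liftP {α β : Type u} (P : β → Prop) (inp : Input α β) : Prop :=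
  ∀ a b, inp a = some b → P b

/-- The componentwise lifting of a function to inputs. -/
def liftF {α β γ : Type u} (f : β → γ) (inp : Input α β) : Input α γ :=
  fun a => (inp a).map f

/-- An input is small if its domain has cardinality smaller than that of `var`. -/
def smallDom {α β : Type u} (inp : Input α β) : Prop :=
  Cardinal.mk (idom inp) < Cardinal.mk var

/-! ### Quasiterms -/

mutual
/-- Quasiterms: raw terms before quotienting by alpha-equivalence. -/
inductive QTerm : Type u where
  | qVar : varsort → var → QTerm
  | qOp : opsym → (index → Option QTerm) → (bindex → Option QAbs) → QTerm
/-- Quasiabstractions. -/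
inductive QAbs : Type u where
  | qAbs : varsort → var → QTerm → QAbs
end

/-- Transposition of two variables. -/
noncomputable def swapVar (z1 z2 x : var) : var :=
  if x = z1 then z2 else if x = z2 then z1 else x

/-- Sort-aware transposition of variables (acts only on variables of varsort `zs`). -/
noncomputable def swapVarS (zs xs : varsort) (z1 z2 x : var) : var :=
  if xs = zs then swapVar var z1 z2 x else x

variable {var varsort index bindex opsym}

/-- Swapping of the variables `z1`, `z2` at varsort `zs` in a quasiterm
(transposing them everywhere, including binding positions). -/
noncomputable def qSwap (z1 z2 : var) (zs : varsort) :
    QTerm var varsort index bindex opsym → QTerm var varsort index bindex opsym :=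
  QTerm.rec (motive_1 := fun _ => QTerm var varsort index bindex opsym)
    (motive_2 := fun _ => QAbs var varsort index bindex opsym)
    (motive_3 := fun _ => Option (QTerm var varsort index bindex opsym))
    (motive_4 := fun _ => Option (QAbs var varsort index bindex opsym))
    (fun xs x => .qVar xs (swapVarS var varsort zs xs z1 z2 x))
    (fun d _ _ rinp rbinp => .qOp d rinp rbinp)
    (fun xs x _ rX => .qAbs xs (swapVarS var varsort zs xs z1 z2 x) rX)
    none (fun _ r => some r) none (fun _ r => some r)

/-- Swapping of variables in a quasiabstraction. -/
noncomputable def qSwapAbs (z1 z2 : var) (zs : varsort) :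
    QAbs var varsort index bindex opsym → QAbs var varsort index bindex opsym
  | .qAbs xs x X => .qAbs xs (swapVarS var varsort zs xs z1 z2 x) (qSwap z1 z2 zs X)

/-! ### Freshness and goodness -/

mutual
/-- `QFresh ys y X`: the variable `y` of varsort `ys` has no free occurrence in `X`. -/
inductive QFresh : varsort → var → QTerm var varsort index bindex opsym → Prop where
  | qVar : ∀ {ys y xs x}, (ys, y) ≠ (xs, x) → QFresh ys y (.qVar xs x)
  | qOp : ∀ {ys y d inp binp}, (∀ i X, inp i = some X → QFresh ys y X) →
      (∀ j A, binp j = some A → QFreshAbs ys y A) → QFresh ys y (.qOp d inp binp)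
/-- Freshness for quasiabstractions. -/
inductive QFreshAbs : varsort → var → QAbs var varsort index bindex opsym → Prop where
  | qAbs_bound : ∀ {xs x X}, QFreshAbs xs x (.qAbs xs x X)
  | qAbs_body : ∀ {ys y xs x X}, QFresh ys y X → QFreshAbs ys y (.qAbs xs x X)
end

mutual
/-- Good quasiterms: all constructors branch less than `|var|`. -/
inductive QGood : QTerm var varsort index bindex opsym → Prop where
  | qVar : ∀ {xs x}, QGood (.qVar xs x)
  | qOp : ∀ {d inp binp}, (∀ i X, inp i = some X → QGood X) →
      (∀ j A, binp j = some A → QGoodAbs A) →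
      smallDom var inp → smallDom var binp → QGood (.qOp d inp binp)
/-- Good quasiabstractions. -/
inductive QGoodAbs : QAbs var varsort index bindex opsym → Prop where
  | qAbs : ∀ {xs x X}, QGood X → QGoodAbs (.qAbs xs x X)
end

/-! ### Alpha-equivalence -/

mutual
/-- Alpha-equivalence of quasiterms. -/
inductive Alpha : QTerm var varsort index bindex opsym →
    QTerm var varsort index bindex opsym → Prop where
  | qVar : ∀ {xs x}, Alpha (.qVar xs x) (.qVar xs x)
  | qOp : ∀ {d inp binp inp' binp'},
      (∀ i, inp i = none ↔ inp' i = none) →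
      (∀ i X X', inp i = some X → inp' i = some X' → Alpha X X') →
      (∀ j, binp j = none ↔ binp' j = none) →
      (∀ j A A', binp j = some A → binp' j = some A' → AlphaAbs A A') →
      Alpha (.qOp d inp binp) (.qOp d inp' binp')
/-- Alpha-equivalence of quasiabstractions (the exists-fresh formulation). -/
inductive AlphaAbs : QAbs var varsort index bindex opsym →
    QAbs var varsort index bindex opsym → Prop where
  | qAbs : ∀ {xs x x' X X' y}, y ∉ ({x, x'} : Set var) →
      QFresh xs y X → QFresh xs y X' →
      Alpha (qSwap y x xs X) (qSwap y x' xs X') →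
      AlphaAbs (.qAbs xs x X) (.qAbs xs x' X')
end

/-! ### Terms and abstractions as quotients -/

variable (var varsort index bindex opsym)

/-- Terms: quasiterms modulo alpha-equivalence. -/
def Term : Type u := Quot (@Alpha var varsort index bindex opsym)

/-- Abstractions: quasiabstractions modulo alpha-equivalence. -/
def Abstr : Type u := Quot (@AlphaAbs var varsort index bindex opsym)

variable {var varsort index bindex opsym}

/-- The projection from quasiterms to terms. -/
def tmk : QTerm var varsort index bindex opsym → Term var varsort index bindex opsym :=
  Quot.mk _

/-- The projection from quasiabstractions to abstractions. -/
def amk : QAbs var varsort index bindex opsym → Abstr var varsort index bindex opsym :=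
  Quot.mk _

/-- A representative of a term. -/
noncomputable def trep (X : Term var varsort index bindex opsym) :
    QTerm var varsort index bindex opsym := Quot.out X

/-- A representative of an abstraction. -/
noncomputable def arep (A : Abstr var varsort index bindex opsym) :
    QAbs var varsort index bindex opsym := Quot.out A

/-- Good terms. -/
def good (X : Term var varsort index bindex opsym) : Prop := QGood (trep X)

/-- Good abstractions. -/
def goodAbs (A : Abstr var varsort index bindex opsym) : Prop := QGoodAbs (arep A)

/-- The variable-injection constructor on terms. -/
def Var (xs : varsort) (x : var) : Term var varsort index bindex opsym :=
  tmk (.qVar xs x)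

/-- The operation constructor on terms. -/
noncomputable def Op (d : opsym) (inp : Input index (Term var varsort index bindex opsym))
    (binp : Input bindex (Abstr var varsort index bindex opsym)) :
    Term var varsort index bindex opsym :=
  tmk (.qOp d (liftF trep inp) (liftF arep binp))

/-- The abstraction constructor. -/
noncomputable def Abs (xs : varsort) (x : var) (X : Term var varsort index bindex opsym) :
    Abstr var varsort index bindex opsym :=
  amk (.qAbs xs x (trep X))

/-- Freshness on terms. -/
def fresh (ys : varsort) (y : var) (X : Term var varsort index bindex opsym) : Prop :=
  QFresh ys y (trep X)

/-- Freshness on abstractions. -/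
def freshAbs (ys : varsort) (y : var) (A : Abstr var varsort index bindex opsym) : Prop :=
  QFreshAbs ys y (arep A)

/-- Swapping on terms. -/
noncomputable def tswap (X : Term var varsort index bindex opsym)
    (z1 z2 : var) (zs : varsort) : Term var varsort index bindex opsym :=
  tmk (qSwap z1 z2 zs (trep X))

/-! ### Substitution -/

mutual
/-- The graph of capture-avoiding substitution on quasiterms:
`QSubst X Y y ys Z` means that `Z` is a result of substituting `Y` for the free
occurrences of the variable `y` of varsort `ys` in `X` (along a capture-free
representative). -/
inductive QSubst : QTerm var varsort index bindex opsym →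
    QTerm var varsort index bindex opsym → var → varsort →
    QTerm var varsort index bindex opsym → Prop where
  | var_eq : ∀ {Y y ys}, QSubst (.qVar ys y) Y y ys Y
  | var_ne : ∀ {Y y ys xs x}, (xs, x) ≠ (ys, y) → QSubst (.qVar xs x) Y y ys (.qVar xs x)
  | op : ∀ {Y y ys d inp binp inp' binp'},
      (∀ i, inp i = none ↔ inp' i = none) →
      (∀ i X X', inp i = some X → inp' i = some X' → QSubst X Y y ys X') →
      (∀ j, binp j = none ↔ binp' j = none) →
      (∀ j A A', binp j = some A → binp' j = some A' → QSubstAbs A Y y ys A') →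
      QSubst (.qOp d inp binp) Y y ys (.qOp d inp' binp')
/-- The graph of capture-avoiding substitution on quasiabstractions. -/
inductive QSubstAbs : QAbs var varsort index bindex opsym →
    QTerm var varsort index bindex opsym → var → varsort →
    QAbs var varsort index bindex opsym → Prop where
  | abs : ∀ {Y y ys xs x X X'}, (xs, x) ≠ (ys, y) → QFresh xs x Y →
      QSubst X Y y ys X' → QSubstAbs (.qAbs xs x X) Y y ys (.qAbs xs x X')
end

/-- The graph of capture-avoiding substitution on terms. -/
def SubstRel (X Y : Term var varsort index bindex opsym) (y : var) (ys : varsort)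
    (Z : Term var varsort index bindex opsym) : Prop :=
  ∃ qX qZ, tmk qX = X ∧ tmk qZ = Z ∧ QSubst qX (trep Y) y ys qZ

/-- Capture-avoiding substitution on terms: `subst X Y y ys` is `X[Y/y]_ys`. -/
noncomputable def subst (X Y : Term var varsort index bindex opsym)
    (y : var) (ys : varsort) : Term var varsort index bindex opsym :=
  if h : ∃ Z, SubstRel X Y y ys Z then h.choose else X

/-- The graph of capture-avoiding substitution on abstractions. -/
def SubstAbsRel (A : Abstr var varsort index bindex opsym)
    (Y : Term var varsort index bindex opsym) (y : var) (ys : varsort)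
    (B : Abstr var varsort index bindex opsym) : Prop :=
  ∃ qA qB, amk qA = A ∧ amk qB = B ∧ QSubstAbs qA (trep Y) y ys qB

/-- Capture-avoiding substitution on abstractions: `substAbs A Y y ys` is `A[Y/y]_ys`. -/
noncomputable def substAbs (A : Abstr var varsort index bindex opsym)
    (Y : Term var varsort index bindex opsym) (y : var) (ys : varsort) :
    Abstr var varsort index bindex opsym :=
  if h : ∃ B, SubstAbsRel A Y y ys B then h.choose else A

/-! ### Parallel substitution -/

mutual
/-- The graph of capture-avoiding parallel substitution on quasiterms, along an
assignment `ρ : varsort → var → Option qterm`. -/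
inductive QPSubst : QTerm var varsort index bindex opsym →
    (varsort → var → Option (QTerm var varsort index bindex opsym)) →
    QTerm var varsort index bindex opsym → Prop where
  | var_some : ∀ {ρ xs x Y}, ρ xs x = some Y → QPSubst (.qVar xs x) ρ Y
  | var_none : ∀ {ρ xs x}, ρ xs x = none → QPSubst (.qVar xs x) ρ (.qVar xs x)
  | op : ∀ {ρ d inp binp inp' binp'},
      (∀ i, inp i = none ↔ inp' i = none) →
      (∀ i X X', inp i = some X → inp' i = some X' → QPSubst X ρ X') →
      (∀ j, binp j = none ↔ binp' j = none) →
      (∀ j A A', binp j = some A → binp' j = some A' → QPSubstAbs A ρ A') →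
      QPSubst (.qOp d inp binp) ρ (.qOp d inp' binp')
/-- The graph of capture-avoiding parallel substitution on quasiabstractions. -/
inductive QPSubstAbs : QAbs var varsort index bindex opsym →
    (varsort → var → Option (QTerm var varsort index bindex opsym)) →
    QAbs var varsort index bindex opsym → Prop where
  | abs : ∀ {ρ xs x X X'}, ρ xs x = none →
      (∀ ys y Y, ρ ys y = some Y → QFresh xs x Y) →
      QPSubst X ρ X' → QPSubstAbs (.qAbs xs x X) ρ (.qAbs xs x X')
end

/-- Turning a term-valued assignment into a quasiterm-valued one, by picking
representatives. -/
noncomputable def qassign (ρ : varsort → var → Option (Term var varsort index bindex opsym)) :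
    varsort → var → Option (QTerm var varsort index bindex opsym) :=
  fun xs x => (ρ xs x).map trep

/-- The graph of parallel substitution on terms. -/
def PSubstRel (X : Term var varsort index bindex opsym)
    (ρ : varsort → var → Option (Term var varsort index bindex opsym))
    (Z : Term var varsort index bindex opsym) : Prop :=
  ∃ qX qZ, tmk qX = X ∧ tmk qZ = Z ∧ QPSubst qX (qassign ρ) qZ

/-- Capture-avoiding parallel substitution on terms: `psubst X ρ` is `X[ρ]`. -/
noncomputable def psubst (X : Term var varsort index bindex opsym)
    (ρ : varsort → var → Option (Term var varsort index bindex opsym)) :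
    Term var varsort index bindex opsym :=
  if h : ∃ Z, PSubstRel X ρ Z then h.choose else X

/-- The graph of parallel substitution on abstractions. -/
def PSubstAbsRel (A : Abstr var varsort index bindex opsym)
    (ρ : varsort → var → Option (Term var varsort index bindex opsym))
    (B : Abstr var varsort index bindex opsym) : Prop :=
  ∃ qA qB, amk qA = A ∧ amk qB = B ∧ QPSubstAbs qA (qassign ρ) qB

/-- Capture-avoiding parallel substitution on abstractions. -/
noncomputable def psubstAbs (A : Abstr var varsort index bindex opsym)
    (ρ : varsort → var → Option (Term var varsort index bindex opsym)) :
    Abstr var varsort index bindex opsym :=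
  if h : ∃ B, PSubstAbsRel A ρ B then h.choose else A


/-!
A good quasiterm has fewer than `|var|` variable occurrences (this is where regularity of
`|var|` enters), so fresh variables always exist. Renaming binders to fresh ones gives a
representative of `X` none of whose binders is `x` or `y`; along it, substituting `y` for `x`
is defined and is just the swap of `y` and `x`. Conversely, whatever representative `subst`
picked, its substitution graph forces the result to be that swap, and forces `y` not to occur
in the representative at all. Swapping `x` with such a `y` in the body of `qAbs xs x _` is an
alpha-renaming; checking the exists-fresh clause needs `Alpha` to be reflexive on good
quasiterms, which is not automatic with this definition and is proved by an induction
generalised over sequences of swaps.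
-/

@[simp] lemma swapVar_eq_swap (z1 z2 x : var) : swapVar var z1 z2 x = Equiv.swap z1 z2 x := by
  rw [swapVar, Equiv.swap_apply_def]

@[simp] lemma swapVarS_same (zs : varsort) (z1 z2 x : var) :
    swapVarS var varsort zs zs z1 z2 x = Equiv.swap z1 z2 x := by
  simp [swapVarS]

@[simp] lemma swapVarS_of_ne {zs xs : varsort} (h : xs ≠ zs) (z1 z2 x : var) :
    swapVarS var varsort zs xs z1 z2 x = x := by
  simp [swapVarS, h]

@[simp] lemma swapVarS_swapVarS (zs xs : varsort) (z1 z2 x : var) :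
    swapVarS var varsort zs xs z1 z2 (swapVarS var varsort zs xs z1 z2 x) = x := by
  by_cases h : xs = zs
  · subst h; simp
  · simp [h]

lemma swapVarS_injective (zs xs : varsort) (z1 z2 : var) :
    Function.Injective (swapVarS var varsort zs xs z1 z2) :=
  Function.LeftInverse.injective (swapVarS_swapVarS zs xs z1 z2)

lemma swapVarS_comm (zs us xs : varsort) (z1 z2 u v x : var) :
    swapVarS var varsort zs xs z1 z2 (swapVarS var varsort us xs u v x) =
      swapVarS var varsort us xs (swapVarS var varsort zs us z1 z2 u)
        (swapVarS var varsort zs us z1 z2 v) (swapVarS var varsort zs xs z1 z2 x) := by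
  by_cases hu : xs = us <;> by_cases hz : xs = zs
  · subst hu hz
    simp [Equiv.swap_apply_apply, Equiv.swap_inv]
  · subst hu; simp [hz]
  · subst hz; simp [hu]
  · simp [hu, hz]

lemma qSwap_qVar (z1 z2 : var) (zs xs : varsort) (x : var) :
    qSwap z1 z2 zs (QTerm.qVar xs x : QTerm var varsort index bindex opsym)
      = QTerm.qVar xs (swapVarS var varsort zs xs z1 z2 x) := rfl

lemma qSwapAbs_qAbs (z1 z2 : var) (zs xs : varsort) (x : var)
    (X : QTerm var varsort index bindex opsym) :
    qSwapAbs z1 z2 zs (QAbs.qAbs xs x X)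
      = QAbs.qAbs xs (swapVarS var varsort zs xs z1 z2 x) (qSwap z1 z2 zs X) := rfl

lemma qSwap_qOp (z1 z2 : var) (zs : varsort) (d : opsym)
    (inp : index → Option (QTerm var varsort index bindex opsym))
    (binp : bindex → Option (QAbs var varsort index bindex opsym)) :
    qSwap z1 z2 zs (QTerm.qOp d inp binp)
      = QTerm.qOp d (fun i => (inp i).map (qSwap z1 z2 zs))
          (fun j => (binp j).map (qSwapAbs z1 z2 zs)) := by
  show QTerm.qOp d _ _ = _
  congr 1
  · funext i; cases inp i <;> rfl
  · funext j
    rcases binp j with _ | ⟨_, _, _⟩ <;> rfl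

theorem qterm_qabs_induction {P : QTerm var varsort index bindex opsym → Prop}
    {Q : QAbs var varsort index bindex opsym → Prop}
    (qVar : ∀ xs x, P (.qVar xs x))
    (qOp : ∀ d inp binp, (∀ i X, inp i = some X → P X) →
      (∀ j A, binp j = some A → Q A) → P (.qOp d inp binp))
    (qAbs : ∀ xs x X, P X → Q (.qAbs xs x X)) :
    (∀ X, P X) ∧ (∀ A, Q A) := by
  have hnone : ∀ {α : Type u} {R : α → Prop} (a : α), none = some a → R a := by
    rintro _ _ _ ⟨⟩
  have hsome : ∀ {α : Type u} {R : α → Prop} (a : α), R a →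
      ∀ b, some a = some b → R b := by
    rintro _ _ _ h _ ⟨⟩; exact h
  exact ⟨fun X => QTerm.rec (motive_3 := fun o => ∀ X, o = some X → P X)
      (motive_4 := fun o => ∀ A, o = some A → Q A) qVar qOp qAbs hnone hsome hnone hsome X,
    fun A => QAbs.rec (motive_3 := fun o => ∀ X, o = some X → P X)
      (motive_4 := fun o => ∀ A, o = some A → Q A) qVar qOp qAbs hnone hsome hnone hsome A⟩

mutual
/-- Occurrences of variables: free, bound and binding ones alike. -/
inductive QOcc : varsort × var → QTerm var varsort index bindex opsym → Prop where
  | qVar : ∀ xs x, QOcc (xs, x) (.qVar xs x)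
  | qOp_inp : ∀ {p d inp binp} (i : index) X, inp i = some X → QOcc p X →
      QOcc p (.qOp d inp binp)
  | qOp_binp : ∀ {p d inp binp} (j : bindex) A, binp j = some A → QOccAbs p A →
      QOcc p (.qOp d inp binp)
inductive QOccAbs : varsort × var → QAbs var varsort index bindex opsym → Prop where
  | bound : ∀ xs x X, QOccAbs (xs, x) (.qAbs xs x X)
  | body : ∀ {p xs x X}, QOcc p X → QOccAbs p (.qAbs xs x X)
end

lemma qFresh_of_not_qOcc (ws : varsort) (v : var) :
    (∀ X : QTerm var varsort index bindex opsym, ¬ QOcc (ws, v) X → QFresh ws v X) ∧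
    (∀ A : QAbs var varsort index bindex opsym, ¬ QOccAbs (ws, v) A → QFreshAbs ws v A) := by
  refine qterm_qabs_induction ?_ ?_ ?_
  · intro xs x h
    refine QFresh.qVar fun he => ?_
    obtain ⟨rfl, rfl⟩ := Prod.mk.inj he
    exact h (.qVar _ _)
  · intro d inp binp hi hb h
    exact QFresh.qOp (fun i X hX => hi i X hX fun ho => h (.qOp_inp i X hX ho))
      (fun j A hA => hb j A hA fun ho => h (.qOp_binp j A hA ho))
  · intro xs x X hX h
    by_cases he : (ws, v) = (xs, x)
    · obtain ⟨rfl, rfl⟩ := Prod.mk.inj he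
      exact QFreshAbs.qAbs_bound
    · exact QFreshAbs.qAbs_body (hX fun ho => h (.body ho))

lemma QFresh.of_not_qOcc {ws : varsort} {v : var} {X : QTerm var varsort index bindex opsym}
    (h : ¬ QOcc (ws, v) X) : QFresh ws v X :=
  (qFresh_of_not_qOcc ws v).1 X h

lemma qOcc_qSwap (z1 z2 : var) (zs : varsort) :
    (∀ X : QTerm var varsort index bindex opsym, ∀ ws v, QOcc (ws, v) X →
      QOcc (ws, swapVarS var varsort zs ws z1 z2 v) (qSwap z1 z2 zs X)) ∧
    (∀ A : QAbs var varsort index bindex opsym, ∀ ws v, QOccAbs (ws, v) A →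
      QOccAbs (ws, swapVarS var varsort zs ws z1 z2 v) (qSwapAbs z1 z2 zs A)) := by
  refine qterm_qabs_induction ?_ ?_ ?_
  · rintro xs x ws v ⟨⟩
    exact QOcc.qVar _ _
  · intro d inp binp hi hb ws v h
    rw [qSwap_qOp]
    rcases h with _ | ⟨i, X, hX, ho⟩ | ⟨j, A, hA, ho⟩
    · exact .qOp_inp i _ (by rw [hX]; rfl) (hi i X hX ws v ho)
    · exact .qOp_binp j _ (by rw [hA]; rfl) (hb j A hA ws v ho)
  · rintro xs x X hX ws v (_ | ⟨ho⟩)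
    · exact QOccAbs.bound _ _ _
    · exact QOccAbs.body (hX ws v ho)

lemma qSwap_qSwap_pair (z1 z2 : var) (zs : varsort) :
    (∀ X : QTerm var varsort index bindex opsym, qSwap z1 z2 zs (qSwap z1 z2 zs X) = X) ∧
    (∀ A : QAbs var varsort index bindex opsym,
      qSwapAbs z1 z2 zs (qSwapAbs z1 z2 zs A) = A) := by
  refine qterm_qabs_induction ?_ ?_ ?_
  · intro xs x
    rw [qSwap_qVar, qSwap_qVar, swapVarS_swapVarS]
  · intro d inp binp hi hb
    simp only [qSwap_qOp, Option.map_map]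
    congr 1
    · funext i; exact (Option.map_congr (hi i)).trans Option.map_id'
    · funext j; exact (Option.map_congr (hb j)).trans Option.map_id'
  · intro xs x X hX
    rw [qSwapAbs_qAbs, qSwapAbs_qAbs, swapVarS_swapVarS, hX]

@[simp] lemma qSwap_qSwap (z1 z2 : var) (zs : varsort)
    (X : QTerm var varsort index bindex opsym) : qSwap z1 z2 zs (qSwap z1 z2 zs X) = X :=
  (qSwap_qSwap_pair z1 z2 zs).1 X

lemma qOcc_qSwap_iff {z1 z2 : var} {zs ws : varsort} {v : var}
    {X : QTerm var varsort index bindex opsym} :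
    QOcc (ws, v) (qSwap z1 z2 zs X) ↔ QOcc (ws, swapVarS var varsort zs ws z1 z2 v) X := by
  constructor
  · intro h
    simpa using (qOcc_qSwap z1 z2 zs).1 _ ws v h
  · intro h
    simpa using (qOcc_qSwap z1 z2 zs).1 _ ws _ h

lemma qSwap_eq_self_pair (z1 z2 : var) (zs : varsort) :
    (∀ X : QTerm var varsort index bindex opsym,
      (∀ v, QOcc (zs, v) X → Equiv.swap z1 z2 v = v) → qSwap z1 z2 zs X = X) ∧
    (∀ A : QAbs var varsort index bindex opsym,
      (∀ v, QOccAbs (zs, v) A → Equiv.swap z1 z2 v = v) → qSwapAbs z1 z2 zs A = A) := by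
  refine qterm_qabs_induction ?_ ?_ ?_
  · intro xs x h
    rw [qSwap_qVar]
    by_cases hs : xs = zs
    · subst hs; simp [h x (.qVar _ _)]
    · simp [hs]
  · intro d inp binp hi hb h
    rw [qSwap_qOp]
    congr 1
    · funext i
      exact (Option.map_congr fun X hx => hi i X hx fun v hv => h v (.qOp_inp i X hx hv)).trans
        Option.map_id'
    · funext j
      exact (Option.map_congr fun A hx => hb j A hx fun v hv => h v (.qOp_binp j A hx hv)).trans
        Option.map_id'
  · intro xs x X hX h
    rw [qSwapAbs_qAbs, hX fun v hv => h v (.body hv)]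
    by_cases hs : xs = zs
    · subst hs; simp [h x (.bound _ _ _)]
    · simp [hs]

@[simp] lemma qSwap_self (z : var) (zs : varsort) (X : QTerm var varsort index bindex opsym) :
    qSwap z z zs X = X :=
  (qSwap_eq_self_pair z z zs).1 X fun _ _ => by simp

lemma qSwap_eq_self_of_not_qOcc {z1 z2 : var} {zs : varsort}
    {X : QTerm var varsort index bindex opsym}
    (h1 : ¬ QOcc (zs, z1) X) (h2 : ¬ QOcc (zs, z2) X) : qSwap z1 z2 zs X = X :=
  (qSwap_eq_self_pair z1 z2 zs).1 X fun v hv =>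
    Equiv.swap_apply_of_ne_of_ne (by rintro rfl; exact h1 hv) (by rintro rfl; exact h2 hv)

lemma qSwap_comm_pair (z1 z2 u v : var) (zs us : varsort) :
    (∀ X : QTerm var varsort index bindex opsym,
      qSwap z1 z2 zs (qSwap u v us X)
        = qSwap (swapVarS var varsort zs us z1 z2 u) (swapVarS var varsort zs us z1 z2 v) us
            (qSwap z1 z2 zs X)) ∧
    (∀ A : QAbs var varsort index bindex opsym,
      qSwapAbs z1 z2 zs (qSwapAbs u v us A)
        = qSwapAbs (swapVarS var varsort zs us z1 z2 u) (swapVarS var varsort zs us z1 z2 v) us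
            (qSwapAbs z1 z2 zs A)) := by
  refine qterm_qabs_induction ?_ ?_ ?_
  · intro xs x
    rw [qSwap_qVar, qSwap_qVar, qSwap_qVar, qSwap_qVar, swapVarS_comm]
  · intro d inp binp hi hb
    simp only [qSwap_qOp, Option.map_map]
    congr 1
    · funext i; exact Option.map_congr (hi i)
    · funext j; exact Option.map_congr (hb j)
  · intro xs x X hX
    rw [qSwapAbs_qAbs, qSwapAbs_qAbs, qSwapAbs_qAbs, qSwapAbs_qAbs, swapVarS_comm, hX]

lemma qSwap_comm (z1 z2 u v : var) (zs us : varsort)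
    (X : QTerm var varsort index bindex opsym) :
    qSwap z1 z2 zs (qSwap u v us X)
      = qSwap (swapVarS var varsort zs us z1 z2 u) (swapVarS var varsort zs us z1 z2 v) us
          (qSwap z1 z2 zs X) :=
  (qSwap_comm_pair z1 z2 u v zs us).1 X

lemma qFresh_qSwap {ws : varsort} {v : var} {X : QTerm var varsort index bindex opsym}
    (h : QFresh ws v X) (z1 z2 : var) (zs : varsort) :
    QFresh ws (swapVarS var varsort zs ws z1 z2 v) (qSwap z1 z2 zs X) := by
  refine QFresh.rec
    (motive_1 := fun X _ => QFresh ws (swapVarS var varsort zs ws z1 z2 v) (qSwap z1 z2 zs X))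
    (motive_2 := fun A _ =>
      QFreshAbs ws (swapVarS var varsort zs ws z1 z2 v) (qSwapAbs z1 z2 zs A))
    ?_ ?_ ?_ ?_ h
  · intro xs x hne
    refine QFresh.qVar fun he => hne ?_
    obtain ⟨rfl, he⟩ := Prod.mk.inj he
    rw [swapVarS_injective _ _ _ _ he]
  · intro d inp binp _ _ hi hb
    rw [qSwap_qOp]
    refine QFresh.qOp (fun i X hX => ?_) (fun j A hA => ?_)
    · obtain ⟨X0, hX0, rfl⟩ := Option.map_eq_some_iff.mp hX
      exact hi i X0 hX0
    · obtain ⟨A0, hA0, rfl⟩ := Option.map_eq_some_iff.mp hA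
      exact hb j A0 hA0
  · intro X
    exact QFreshAbs.qAbs_bound
  · intro xs x X _ hX
    exact QFreshAbs.qAbs_body hX

lemma qFresh_qSwap_iff {ws zs : varsort} {v z1 z2 : var}
    {X : QTerm var varsort index bindex opsym} :
    QFresh ws v (qSwap z1 z2 zs X) ↔ QFresh ws (swapVarS var varsort zs ws z1 z2 v) X := by
  constructor
  · intro h
    simpa using qFresh_qSwap h z1 z2 zs
  · intro h
    simpa using qFresh_qSwap h z1 z2 zs

lemma qFreshAbs_qAbs_iff {ws xs : varsort} {v x : var}
    {X : QTerm var varsort index bindex opsym} :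
    QFreshAbs ws v (.qAbs xs x X) ↔ (ws, v) = (xs, x) ∨ QFresh ws v X := by
  constructor
  · rintro (_ | ⟨h⟩)
    · exact Or.inl rfl
    · exact Or.inr h
  · rintro (h | h)
    · obtain ⟨rfl, rfl⟩ := Prod.mk.inj h
      exact QFreshAbs.qAbs_bound
    · exact QFreshAbs.qAbs_body h

lemma qFreshAbs_qAbs_iff_qFresh_qSwap {ws xs : varsort} {v x u : var}
    {X : QTerm var varsort index bindex opsym} (hu : QFresh xs u X) (hv : (ws, v) ≠ (xs, u)) :
    QFreshAbs ws v (.qAbs xs x X) ↔ QFresh ws v (qSwap u x xs X) := by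
  rw [qFreshAbs_qAbs_iff, qFresh_qSwap_iff]
  by_cases hs : ws = xs
  · subst hs
    have hvu : v ≠ u := fun h => hv (h ▸ rfl)
    by_cases hvx : v = x
    · subst hvx; simpa using hu
    · simp [hvx, Equiv.swap_apply_of_ne_of_ne hvu hvx]
  · simp [hs]

lemma qGood_qSwap {X : QTerm var varsort index bindex opsym} (h : QGood X)
    (z1 z2 : var) (zs : varsort) : QGood (qSwap z1 z2 zs X) := by
  have hdom : ∀ {α β : Type u} (inp : α → Option β) (f : β → β),
      idom (fun a => (inp a).map f) = idom inp := by
    intro _ _ inp f; ext a; simp [idom]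
  refine QGood.rec
    (motive_1 := fun X _ => QGood (qSwap z1 z2 zs X))
    (motive_2 := fun A _ => QGoodAbs (qSwapAbs z1 z2 zs A))
    ?_ ?_ ?_ h
  · intro xs x
    exact QGood.qVar
  · intro d inp binp _ _ hsm hsmb hi hb
    rw [qSwap_qOp]
    refine QGood.qOp (fun i X hX => ?_) (fun j A hA => ?_) ?_ ?_
    · obtain ⟨X0, hX0, rfl⟩ := Option.map_eq_some_iff.mp hX
      exact hi i X0 hX0
    · obtain ⟨A0, hA0, rfl⟩ := Option.map_eq_some_iff.mp hA
      exact hb j A0 hA0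
    · rwa [smallDom, hdom]
    · rwa [smallDom, hdom]
  · intro xs x X _ hX
    exact QGoodAbs.qAbs hX

lemma exists_eq_some_of_eq_none_iff {α β : Type u} {o : Option α} {o' : Option β} {b : β}
    (h : o = none ↔ o' = none) (h' : o' = some b) : ∃ a, o = some a := by
  cases o with
  | none => simp [h.mp rfl] at h'
  | some a => exact ⟨a, rfl⟩

lemma alpha_qSwap {X X' : QTerm var varsort index bindex opsym}
    (h : Alpha X X') (z1 z2 : var) (zs : varsort) :
    Alpha (qSwap z1 z2 zs X) (qSwap z1 z2 zs X') := by
  refine Alpha.rec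
    (motive_1 := fun X X' _ => Alpha (qSwap z1 z2 zs X) (qSwap z1 z2 zs X'))
    (motive_2 := fun A A' _ => AlphaAbs (qSwapAbs z1 z2 zs A) (qSwapAbs z1 z2 zs A'))
    ?_ ?_ ?_ h
  · intro xs x
    exact Alpha.qVar
  · intro d inp binp inp' binp' hn _ hbn _ hi hb
    rw [qSwap_qOp, qSwap_qOp]
    refine Alpha.qOp (fun i => by simp [hn i]) (fun i X X' hX hX' => ?_)
      (fun j => by simp [hbn j]) (fun j A A' hA hA' => ?_)
    · obtain ⟨X0, hX0, rfl⟩ := Option.map_eq_some_iff.mp hX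
      obtain ⟨X0', hX0', rfl⟩ := Option.map_eq_some_iff.mp hX'
      exact hi i X0 X0' hX0 hX0'
    · obtain ⟨A0, hA0, rfl⟩ := Option.map_eq_some_iff.mp hA
      obtain ⟨A0', hA0', rfl⟩ := Option.map_eq_some_iff.mp hA'
      exact hb j A0 A0' hA0 hA0'
  · intro xs x x' X X' y hy hfX hfX' _ ih
    refine AlphaAbs.qAbs (y := swapVarS var varsort zs xs z1 z2 y) ?_
      (qFresh_qSwap hfX z1 z2 zs) (qFresh_qSwap hfX' z1 z2 zs) ?_
    · simp only [Set.mem_insert_iff, Set.mem_singleton_iff,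
        (swapVarS_injective zs xs z1 z2).eq_iff] at hy ⊢
      exact hy
    · rw [← qSwap_comm, ← qSwap_comm]
      exact ih

lemma Alpha.symm {X X' : QTerm var varsort index bindex opsym} (h : Alpha X X') :
    Alpha X' X := by
  refine Alpha.rec (motive_1 := fun X X' _ => Alpha X' X)
    (motive_2 := fun A A' _ => AlphaAbs A' A) ?_ ?_ ?_ h
  · intro xs x
    exact Alpha.qVar
  · intro d inp binp inp' binp' hn _ hbn _ hi hb
    exact Alpha.qOp (fun i => (hn i).symm) (fun i X X' hX hX' => hi i X' X hX' hX)
      (fun j => (hbn j).symm) (fun j A A' hA hA' => hb j A' A hA' hA)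
  · intro xs x x' X X' y hy hfX hfX' _ ih
    refine AlphaAbs.qAbs (y := y) ?_ hfX' hfX ih
    simpa [or_comm] using hy

lemma Alpha.qGood {X X' : QTerm var varsort index bindex opsym}
    (h : Alpha X X') (hX : QGood X) : QGood X' := by
  have hdom : ∀ {α β : Type u} {inp inp' : α → Option β},
      (∀ a, inp a = none ↔ inp' a = none) → idom inp' = idom inp := by
    intro _ _ _ _ hn; ext a; simp [idom, hn a]
  refine Alpha.rec
    (motive_1 := fun X X' _ => QGood X → QGood X')
    (motive_2 := fun A A' _ => QGoodAbs A → QGoodAbs A')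
    ?_ ?_ ?_ h hX
  · intro xs x _
    exact QGood.qVar
  · rintro d inp binp inp' binp' hn - hbn - hi hb (_ | ⟨hgi, hgb, hsm, hsmb⟩)
    refine QGood.qOp (fun i X' hX' => ?_) (fun j A' hA' => ?_) ?_ ?_
    · obtain ⟨X, hX⟩ := exists_eq_some_of_eq_none_iff (hn i) hX'
      exact hi i X X' hX hX' (hgi i X hX)
    · obtain ⟨A, hA⟩ := exists_eq_some_of_eq_none_iff (hbn j) hA'
      exact hb j A A' hA hA' (hgb j A hA)
    · rwa [smallDom, hdom hn]
    · rwa [smallDom, hdom hbn]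
  · rintro xs x x' X X' y - - - - ih ⟨hgX⟩
    have := qGood_qSwap (ih (qGood_qSwap hgX y x xs)) y x' xs
    rw [qSwap_qSwap] at this
    exact QGoodAbs.qAbs this

lemma Alpha.qFresh {X X' : QTerm var varsort index bindex opsym}
    (h : Alpha X X') {ws : varsort} {v : var} (hf : QFresh ws v X) : QFresh ws v X' := by
  refine Alpha.rec
    (motive_1 := fun X X' _ => ∀ ws v, QFresh ws v X → QFresh ws v X')
    (motive_2 := fun A A' _ => ∀ ws v, QFreshAbs ws v A → QFreshAbs ws v A')
    ?_ ?_ ?_ h ws v hf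
  · intro xs x ws v hf
    exact hf
  · rintro d inp binp inp' binp' hn - hbn - hi hb ws v (_ | ⟨hfi, hfb⟩)
    refine QFresh.qOp (fun i X' hX' => ?_) (fun j A' hA' => ?_)
    · obtain ⟨X, hX⟩ := exists_eq_some_of_eq_none_iff (hn i) hX'
      exact hi i X X' hX hX' ws v (hfi i X hX)
    · obtain ⟨A, hA⟩ := exists_eq_some_of_eq_none_iff (hbn j) hA'
      exact hb j A A' hA hA' ws v (hfb j A hA)
  · intro xs x x' X X' u _ hfX hfX' _ ih ws v hf
    by_cases hvu : (ws, v) = (xs, u)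
    · obtain ⟨rfl, rfl⟩ := Prod.mk.inj hvu
      exact QFreshAbs.qAbs_body hfX'
    · exact (qFreshAbs_qAbs_iff_qFresh_qSwap hfX' hvu).mpr
        (ih ws v ((qFreshAbs_qAbs_iff_qFresh_qSwap hfX hvu).mp hf))

lemma iff_of_quot_mk_eq {α : Type u} {r : α → α → Prop} {P : α → Prop}
    (hP : ∀ a b, r a b → P a → P b) (hsymm : ∀ a b, r a b → r b a) {a b : α}
    (h : Quot.mk r a = Quot.mk r b) : P a ↔ P b := by
  have := congrArg (Quot.lift P fun a b hab => propext ⟨hP a b hab, hP b a (hsymm a b hab)⟩) h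
  simpa using this

lemma good_tmk_iff {X : QTerm var varsort index bindex opsym} : good (tmk X) ↔ QGood X :=
  iff_of_quot_mk_eq (fun _ _ h => h.qGood) (fun _ _ h => h.symm) (Quot.out_eq (tmk X))

lemma fresh_tmk_iff {ys : varsort} {y : var} {X : QTerm var varsort index bindex opsym} :
    fresh ys y (tmk X) ↔ QFresh ys y X :=
  iff_of_quot_mk_eq (fun _ _ h => h.qFresh) (fun _ _ h => h.symm) (Quot.out_eq (tmk X))

lemma QGood.of_tmk_eq {U V : QTerm var varsort index bindex opsym} (h : tmk U = tmk V)
    (hU : QGood U) : QGood V :=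
  good_tmk_iff.mp (h ▸ good_tmk_iff.mpr hU)

lemma exists_var_not_mem (hinf : Cardinal.aleph0 ≤ Cardinal.mk var)
    {S : Set (varsort × var)} (hS : Cardinal.mk S < Cardinal.mk var)
    (ws : varsort) (L : List var) : ∃ u : var, (ws, u) ∉ S ∧ u ∉ L := by
  set T : Set var := Prod.mk ws ⁻¹' S ∪ {v | v ∈ L}
  have hT : Cardinal.mk T < Cardinal.mk var :=
    (Cardinal.mk_union_le _ _).trans_lt <| Cardinal.add_lt_of_lt hinf
      ((Cardinal.mk_preimage_of_injective _ S (Prod.mk_right_injective ws)).trans_lt hS)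
      ((List.finite_toSet L).lt_aleph0.trans_le hinf)
  obtain ⟨u, hu⟩ := (Set.ne_univ_iff_exists_notMem T).mp fun h => by
    rw [h, Cardinal.mk_univ] at hT
    exact hT.false
  exact ⟨u, fun h => hu (Or.inl h), fun h => hu (Or.inr h)⟩

lemma card_qOcc_lt (hreg : (Cardinal.mk var).IsRegular) :
    (∀ X : QTerm var varsort index bindex opsym,
      QGood X → Cardinal.mk {p | QOcc p X} < Cardinal.mk var) ∧
    (∀ A : QAbs var varsort index bindex opsym,
      QGoodAbs A → Cardinal.mk {p | QOccAbs p A} < Cardinal.mk var) := by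
  have hinf := hreg.aleph0_le
  have hone : (1 : Cardinal) < Cardinal.mk var := Cardinal.one_lt_aleph0.trans_le hinf
  refine qterm_qabs_induction ?_ ?_ ?_
  · intro xs x _
    have : {p | QOcc p (QTerm.qVar xs x : QTerm var varsort index bindex opsym)} = {(xs, x)} := by
      ext p
      exact ⟨by rintro ⟨⟩; rfl, by rintro rfl; exact .qVar _ _⟩
    rwa [this, Cardinal.mk_singleton]
  · rintro d inp binp hi hb (_ | ⟨hgi, hgb, hsm, hsmb⟩)
    have hsub : {p | QOcc p (QTerm.qOp d inp binp)} ⊆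
        (⋃ i ∈ idom inp, {p | ∃ X, inp i = some X ∧ QOcc p X}) ∪
        (⋃ j ∈ idom binp, {p | ∃ A, binp j = some A ∧ QOccAbs p A}) := by
      rintro p (_ | ⟨i, X, hX, ho⟩ | ⟨j, A, hA, ho⟩)
      · exact Or.inl (Set.mem_biUnion (x := i) (by simp [idom, hX]) ⟨X, hX, ho⟩)
      · exact Or.inr (Set.mem_biUnion (x := j) (by simp [idom, hA]) ⟨A, hA, ho⟩)
    refine (Cardinal.mk_le_mk_of_subset hsub).trans_lt <|
      (Cardinal.mk_union_le _ _).trans_lt <| Cardinal.add_lt_of_lt hinf ?_ ?_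
    · refine (Cardinal.card_biUnion_lt_iff_forall_of_isRegular hreg hsm).mpr fun i hi' => ?_
      obtain ⟨X, hX⟩ := Option.ne_none_iff_exists'.mp hi'
      simpa [hX] using hi i X hX (hgi i X hX)
    · refine (Cardinal.card_biUnion_lt_iff_forall_of_isRegular hreg hsmb).mpr fun j hj' => ?_
      obtain ⟨A, hA⟩ := Option.ne_none_iff_exists'.mp hj'
      simpa [hA] using hb j A hA (hgb j A hA)
  · rintro xs x X hX ⟨hgX⟩
    have hsub : {p | QOccAbs p (QAbs.qAbs xs x X)} ⊆ insert (xs, x) {p | QOcc p X} := by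
      rintro p (_ | ⟨ho⟩)
      · exact Set.mem_insert _ _
      · exact Set.mem_insert_of_mem _ ho
    exact (Cardinal.mk_le_mk_of_subset hsub).trans_lt <|
      Cardinal.mk_insert_le.trans_lt (Cardinal.add_lt_of_lt hinf (hX hgX) hone)

lemma QGood.exists_not_qOcc (hreg : (Cardinal.mk var).IsRegular)
    {X : QTerm var varsort index bindex opsym} (hX : QGood X) (ws : varsort) (L : List var) :
    ∃ u, ¬ QOcc (ws, u) X ∧ u ∉ L :=
  exists_var_not_mem hreg.aleph0_le ((card_qOcc_lt hreg).1 X hX) ws L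

lemma QGood.exists_not_qOcc₂ (hreg : (Cardinal.mk var).IsRegular)
    {X Y : QTerm var varsort index bindex opsym} (hX : QGood X) (hY : QGood Y)
    (ws : varsort) (L : List var) :
    ∃ u, ¬ QOcc (ws, u) X ∧ ¬ QOcc (ws, u) Y ∧ u ∉ L := by
  obtain ⟨u, hu, huL⟩ := exists_var_not_mem hreg.aleph0_le
    ((Cardinal.mk_union_le _ _).trans_lt <| Cardinal.add_lt_of_lt hreg.aleph0_le
      ((card_qOcc_lt hreg).1 X hX) ((card_qOcc_lt hreg).1 Y hY)) ws L
  exact ⟨u, fun h => hu (Or.inl h), fun h => hu (Or.inr h), huL⟩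

noncomputable def qSwaps (σ : List (var × var × varsort))
    (X : QTerm var varsort index bindex opsym) : QTerm var varsort index bindex opsym :=
  σ.foldr (fun t Y => qSwap t.1 t.2.1 t.2.2 Y) X

noncomputable def qSwapsAbs (σ : List (var × var × varsort))
    (A : QAbs var varsort index bindex opsym) : QAbs var varsort index bindex opsym :=
  σ.foldr (fun t B => qSwapAbs t.1 t.2.1 t.2.2 B) A

noncomputable def swapVarsS (σ : List (var × var × varsort)) (ws : varsort) (w : var) : var :=
  σ.foldr (fun t v => swapVarS var varsort t.2.2 ws t.1 t.2.1 v) w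

lemma qSwaps_qVar (σ : List (var × var × varsort)) (xs : varsort) (x : var) :
    qSwaps σ (QTerm.qVar xs x : QTerm var varsort index bindex opsym)
      = .qVar xs (swapVarsS σ xs x) := by
  induction σ with
  | nil => rfl
  | cons t σ ih => exact congrArg (qSwap t.1 t.2.1 t.2.2) ih

lemma qSwaps_qOp (σ : List (var × var × varsort)) (d : opsym)
    (inp : index → Option (QTerm var varsort index bindex opsym))
    (binp : bindex → Option (QAbs var varsort index bindex opsym)) :
    qSwaps σ (QTerm.qOp d inp binp)
      = .qOp d (fun i => (inp i).map (qSwaps σ)) (fun j => (binp j).map (qSwapsAbs σ)) := by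
  induction σ with
  | nil =>
    show QTerm.qOp d inp binp = QTerm.qOp d (fun i => (inp i).map id) (fun j => (binp j).map id)
    simp
  | cons t σ ih =>
    simp only [qSwaps, List.foldr_cons] at ih ⊢
    rw [ih, qSwap_qOp]
    simp only [Option.map_map]
    rfl

lemma qSwapsAbs_qAbs (σ : List (var × var × varsort)) (ws : varsort) (w : var)
    (B : QTerm var varsort index bindex opsym) :
    qSwapsAbs σ (.qAbs ws w B) = .qAbs ws (swapVarsS σ ws w) (qSwaps σ B) := by
  induction σ with
  | nil => rfl
  | cons t σ ih => exact congrArg (qSwapAbs t.1 t.2.1 t.2.2) ih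

lemma qGood_qSwaps (σ : List (var × var × varsort))
    {X : QTerm var varsort index bindex opsym} (h : QGood X) : QGood (qSwaps σ X) := by
  induction σ with
  | nil => exact h
  | cons t σ ih => exact qGood_qSwap ih _ _ _

/-- The abstraction clause needs the induction hypothesis for swapped bodies, hence the
generalisation over all sequences of swaps. -/
lemma alpha_refl_qSwaps (hreg : (Cardinal.mk var).IsRegular) :
    (∀ X : QTerm var varsort index bindex opsym,
      QGood X → ∀ σ, Alpha (qSwaps σ X) (qSwaps σ X)) ∧
    (∀ A : QAbs var varsort index bindex opsym,
      QGoodAbs A → ∀ σ, AlphaAbs (qSwapsAbs σ A) (qSwapsAbs σ A)) := by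
  refine qterm_qabs_induction ?_ ?_ ?_
  · intro xs x _ σ
    rw [qSwaps_qVar]
    exact Alpha.qVar
  · rintro d inp binp hi hb (_ | ⟨hgi, hgb, -, -⟩) σ
    rw [qSwaps_qOp]
    refine Alpha.qOp (fun i => Iff.rfl) (fun i X X' hX hX' => ?_)
      (fun j => Iff.rfl) (fun j A A' hA hA' => ?_)
    · obtain rfl := Option.some_injective _ (hX.symm.trans hX')
      obtain ⟨X0, hX0, rfl⟩ := Option.map_eq_some_iff.mp hX
      exact hi i X0 hX0 (hgi i X0 hX0) σ
    · obtain rfl := Option.some_injective _ (hA.symm.trans hA')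
      obtain ⟨A0, hA0, rfl⟩ := Option.map_eq_some_iff.mp hA
      exact hb j A0 hA0 (hgb j A0 hA0) σ
  · rintro ws w B hB ⟨hgB⟩ σ
    rw [qSwapsAbs_qAbs]
    obtain ⟨u, hu, huw⟩ := (qGood_qSwaps σ hgB).exists_not_qOcc hreg ws [swapVarsS σ ws w]
    have hfu := QFresh.of_not_qOcc hu
    refine AlphaAbs.qAbs (y := u) (by simpa using huw) hfu hfu ?_
    exact hB hgB ((u, swapVarsS σ ws w, ws) :: σ)

lemma QGood.alpha_refl (hreg : (Cardinal.mk var).IsRegular)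
    {X : QTerm var varsort index bindex opsym} (h : QGood X) : Alpha X X :=
  (alpha_refl_qSwaps hreg).1 X h []

lemma Alpha.qAbs_congr (hreg : (Cardinal.mk var).IsRegular)
    {U V : QTerm var varsort index bindex opsym} (h : Alpha U V) (hU : QGood U)
    (ws : varsort) (w : var) : AlphaAbs (.qAbs ws w U) (.qAbs ws w V) := by
  obtain ⟨u, huU, huV, huw⟩ := hU.exists_not_qOcc₂ hreg (h.qGood hU) ws [w]
  exact AlphaAbs.qAbs (y := u) (by simpa using huw) (.of_not_qOcc huU) (.of_not_qOcc huV)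
    (alpha_qSwap h u w ws)

lemma amk_qAbs_eq_of_tmk_eq (hreg : (Cardinal.mk var).IsRegular)
    {U V : QTerm var varsort index bindex opsym} (h : tmk U = tmk V) (hU : QGood U)
    (ws : varsort) (w : var) : amk (.qAbs ws w U) = amk (.qAbs ws w V) := by
  have hrel := Quot.eqvGen_exact h
  clear h
  induction hrel with
  | rel _ _ hab => exact Quot.sound (hab.qAbs_congr hreg hU ws w)
  | refl => rfl
  | symm _ _ hab ih => exact (ih (.of_tmk_eq (Quot.eqvGen_sound hab).symm hU)).symm
  | trans _ _ _ hab _ ih1 ih2 => exact (ih1 hU).trans (ih2 (.of_tmk_eq (Quot.eqvGen_sound hab) hU))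

lemma Abs_tmk (hreg : (Cardinal.mk var).IsRegular) {U : QTerm var varsort index bindex opsym}
    (hU : QGood U) (xs : varsort) (x : var) : Abs xs x (tmk U) = amk (.qAbs xs x U) :=
  amk_qAbs_eq_of_tmk_eq hreg (Quot.out_eq (tmk U)) (good_tmk_iff.mpr hU) xs x

lemma QSubst.eq_qSwap {X Y Z : QTerm var varsort index bindex opsym} {x : var} {ys : varsort}
    (h : QSubst X Y x ys Z) :
    ∀ y, Y = .qVar ys y → QFresh ys y X → Z = qSwap y x ys X := by
  refine QSubst.rec
    (motive_1 := fun X Y x ys Z _ => ∀ y, Y = .qVar ys y → QFresh ys y X → Z = qSwap y x ys X)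
    (motive_2 := fun A Y x ys B _ =>
      ∀ y, Y = .qVar ys y → QFreshAbs ys y A → B = qSwapAbs y x ys A)
    ?_ ?_ ?_ ?_ h
  · rintro Y x ys y rfl -
    simp [qSwap_qVar]
  · rintro Y x ys xs z hne y rfl ⟨hne'⟩
    rw [qSwap_qVar]
    by_cases hs : xs = ys
    · subst hs
      have hzx : z ≠ x := fun h => hne (h ▸ rfl)
      have hzy : z ≠ y := fun h => hne' (h ▸ rfl)
      simp [Equiv.swap_apply_of_ne_of_ne hzy hzx]
    · simp [hs]
  · rintro Y x ys d inp binp inp' binp' hn - hbn - hi hb y hY (_ | ⟨hfi, hfb⟩)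
    rw [qSwap_qOp]
    congr 1
    · funext i
      cases hX : inp i with
      | none => exact (hn i).mp hX
      | some X =>
        obtain ⟨X', hX'⟩ := exists_eq_some_of_eq_none_iff (hn i).symm hX
        rw [hX', Option.map_some, hi i X X' hX hX' y hY (hfi i X hX)]
    · funext j
      cases hA : binp j with
      | none => exact (hbn j).mp hA
      | some A =>
        obtain ⟨A', hA'⟩ := exists_eq_some_of_eq_none_iff (hbn j).symm hA
        rw [hA', Option.map_some, hb j A A' hA hA' y hY (hfb j A hA)]
  · rintro Y x ys xs z X X' hne hfY - ih y rfl hf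
    obtain ⟨hzy⟩ := hfY
    obtain (_ | ⟨hfX⟩) := hf
    · exact absurd rfl hzy
    rw [qSwapAbs_qAbs, ih y rfl hfX]
    by_cases hs : xs = ys
    · subst hs
      have hzx : z ≠ x := fun h => hne (h ▸ rfl)
      have hzy' : z ≠ y := fun h => hzy (h ▸ rfl)
      simp [Equiv.swap_apply_of_ne_of_ne hzy' hzx]
    · simp [hs]

/-- `QSubst` only passes binders that differ from the substituted variable and are fresh for
the substituted term, so a fresh `y` cannot even occur bound. -/
lemma QSubst.not_qOcc {X Y Z : QTerm var varsort index bindex opsym} {x : var} {ys : varsort}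
    (h : QSubst X Y x ys Z) :
    ∀ y, Y = .qVar ys y → QFresh ys y X → x ≠ y → ¬ QOcc (ys, y) X := by
  refine QSubst.rec
    (motive_1 := fun X Y x ys Z _ =>
      ∀ y, Y = .qVar ys y → QFresh ys y X → x ≠ y → ¬ QOcc (ys, y) X)
    (motive_2 := fun A Y x ys B _ =>
      ∀ y, Y = .qVar ys y → QFreshAbs ys y A → x ≠ y → ¬ QOccAbs (ys, y) A)
    ?_ ?_ ?_ ?_ h
  · rintro Y x ys y rfl - hxy ⟨⟩
    exact hxy rfl
  · rintro Y x ys xs z - y rfl ⟨hne⟩ - ⟨⟩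
    exact hne rfl
  · rintro Y x ys d inp binp inp' binp' hn - hbn - hi hb y hY (_ | ⟨hfi, hfb⟩) hxy
      (_ | ⟨i, X, hX, ho⟩ | ⟨j, A, hA, ho⟩)
    · obtain ⟨X', hX'⟩ := exists_eq_some_of_eq_none_iff (hn i).symm hX
      exact hi i X X' hX hX' y hY (hfi i X hX) hxy ho
    · obtain ⟨A', hA'⟩ := exists_eq_some_of_eq_none_iff (hbn j).symm hA
      exact hb j A A' hA hA' y hY (hfb j A hA) hxy ho
  · rintro Y x ys xs z X X' - hfY - ih y rfl hf hxy ho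
    obtain ⟨hzy⟩ := hfY
    rcases ho with _ | ⟨ho⟩
    · exact hzy rfl
    rcases hf with _ | ⟨hfX⟩
    · exact hzy rfl
    · exact ih y rfl hfX hxy ho

lemma qSwap_qSwap_of_not_qOcc {u y x : var} {zs : varsort}
    {X : QTerm var varsort index bindex opsym} (hu : ¬ QOcc (zs, u) X) (hy : ¬ QOcc (zs, y) X)
    (hxu : x ≠ u) (hxy : x ≠ y) : qSwap u y zs (qSwap y x zs X) = qSwap u x zs X := by
  rw [qSwap_comm, qSwap_eq_self_of_not_qOcc hu hy]
  simp [Equiv.swap_apply_of_ne_of_ne hxu hxy]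

lemma Alpha.qAbs_qSwap (hreg : (Cardinal.mk var).IsRegular)
    {X X' : QTerm var varsort index bindex opsym} (h : Alpha X X') (hX : QGood X)
    {xs : varsort} {x y : var} (hy : ¬ QOcc (xs, y) X') (hxy : x ≠ y) :
    AlphaAbs (.qAbs xs x X) (.qAbs xs y (qSwap y x xs X')) := by
  obtain ⟨u, huX, huX', hu⟩ := hX.exists_not_qOcc₂ hreg (h.qGood hX) xs [x, y]
  simp only [List.mem_cons, List.not_mem_nil, or_false, not_or] at hu
  refine AlphaAbs.qAbs (y := u) (by simpa using hu) (.of_not_qOcc huX) (.of_not_qOcc ?_) ?_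
  · rwa [qOcc_qSwap_iff, swapVarS_same, Equiv.swap_apply_of_ne_of_ne hu.2 hu.1]
  · rw [qSwap_qSwap_of_not_qOcc huX' hy (Ne.symm hu.1) hxy]
    exact alpha_qSwap h u x xs

mutual
inductive QBindersAvoid (F : Set (varsort × var)) :
    QTerm var varsort index bindex opsym → Prop where
  | qVar : ∀ xs x, QBindersAvoid F (.qVar xs x)
  | qOp : ∀ {d inp binp}, (∀ i X, inp i = some X → QBindersAvoid F X) →
      (∀ j A, binp j = some A → QBindersAvoidAbs F A) → QBindersAvoid F (.qOp d inp binp)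
inductive QBindersAvoidAbs (F : Set (varsort × var)) :
    QAbs var varsort index bindex opsym → Prop where
  | qAbs : ∀ {xs x X}, (xs, x) ∉ F → QBindersAvoid F X → QBindersAvoidAbs F (.qAbs xs x X)
end

lemma QBindersAvoid.qSwap_of_not_qOcc {F : Set (varsort × var)}
    {X : QTerm var varsort index bindex opsym} (h : QBindersAvoid F X) {z1 z2 : var}
    {zs : varsort} (h1 : ¬ QOcc (zs, z1) X) (h1F : (zs, z1) ∉ F) :
    QBindersAvoid F (qSwap z1 z2 zs X) := by
  refine QBindersAvoid.rec
    (motive_1 := fun X _ => ¬ QOcc (zs, z1) X → QBindersAvoid F (qSwap z1 z2 zs X))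
    (motive_2 := fun A _ => ¬ QOccAbs (zs, z1) A → QBindersAvoidAbs F (qSwapAbs z1 z2 zs A))
    ?_ ?_ ?_ h h1
  · intro xs x _
    exact QBindersAvoid.qVar _ _
  · intro d inp binp _ _ hi hb hocc
    rw [qSwap_qOp]
    refine QBindersAvoid.qOp (fun i X hX => ?_) (fun j A hA => ?_)
    · obtain ⟨X0, hX0, rfl⟩ := Option.map_eq_some_iff.mp hX
      exact hi i X0 hX0 fun ho => hocc (.qOp_inp i X0 hX0 ho)
    · obtain ⟨A0, hA0, rfl⟩ := Option.map_eq_some_iff.mp hA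
      exact hb j A0 hA0 fun ho => hocc (.qOp_binp j A0 hA0 ho)
  · intro xs x X hxF _ hX hocc
    refine QBindersAvoidAbs.qAbs ?_ (hX fun ho => hocc (.body ho))
    by_cases hs : xs = zs
    · subst hs
      have hx1 : x ≠ z1 := by rintro rfl; exact hocc (.bound _ _ _)
      by_cases hx2 : x = z2
      · subst hx2; simpa using h1F
      · simpa [Equiv.swap_apply_of_ne_of_ne hx1 hx2] using hxF
    · simpa [hs] using hxF

lemma exists_input_of_forall_exists {α β γ : Type u} {R : β → γ → Prop}
    {inp : α → Option β} (h : ∀ a b, inp a = some b → ∃ c, R b c) :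
    ∃ inp' : α → Option γ, (∀ a, inp a = none ↔ inp' a = none) ∧
      ∀ a b c, inp a = some b → inp' a = some c → R b c := by
  have : ∀ a, ∃ o : Option γ, (inp a = none ↔ o = none) ∧
      ∀ b c, inp a = some b → o = some c → R b c := by
    intro a
    cases ha : inp a with
    | none => exact ⟨none, by simp, by simp⟩
    | some b =>
      obtain ⟨c, hc⟩ := h a b ha
      exact ⟨some c, by simp, by rintro _ _ ⟨⟩ ⟨⟩; exact hc⟩
  choose inp' hinp' using this
  exact ⟨inp', fun a => (hinp' a).1, fun a => (hinp' a).2⟩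

lemma exists_alpha_qBindersAvoid (hreg : (Cardinal.mk var).IsRegular)
    {F : Set (varsort × var)} (hF : Cardinal.mk F < Cardinal.mk var) :
    (∀ X : QTerm var varsort index bindex opsym, QGood X →
      ∃ X', Alpha X X' ∧ QBindersAvoid F X') ∧
    (∀ A : QAbs var varsort index bindex opsym, QGoodAbs A →
      ∃ A', AlphaAbs A A' ∧ QBindersAvoidAbs F A') := by
  refine qterm_qabs_induction ?_ ?_ ?_
  · intro ws w _
    exact ⟨_, Alpha.qVar, QBindersAvoid.qVar ws w⟩
  · rintro d inp binp hi hb (_ | ⟨hgi, hgb, -, -⟩)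
    obtain ⟨inp', hn, hinp'⟩ :=
      exists_input_of_forall_exists fun i X hX => hi i X hX (hgi i X hX)
    obtain ⟨binp', hbn, hbinp'⟩ :=
      exists_input_of_forall_exists fun j A hA => hb j A hA (hgb j A hA)
    refine ⟨.qOp d inp' binp', Alpha.qOp hn (fun i X X' hX hX' => (hinp' i X X' hX hX').1) hbn
      (fun j A A' hA hA' => (hbinp' j A A' hA hA').1), QBindersAvoid.qOp (fun i X' hX' => ?_)
      (fun j A' hA' => ?_)⟩
    · obtain ⟨X, hX⟩ := exists_eq_some_of_eq_none_iff (hn i) hX'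
      exact (hinp' i X X' hX hX').2
    · obtain ⟨A, hA⟩ := exists_eq_some_of_eq_none_iff (hbn j) hA'
      exact (hbinp' j A A' hA hA').2
  · rintro ws w B hB ⟨hgB⟩
    obtain ⟨B', hαB, hB'⟩ := hB hgB
    obtain ⟨w', hw', hw'w⟩ := exists_var_not_mem hreg.aleph0_le
      ((Cardinal.mk_union_le _ _).trans_lt <| Cardinal.add_lt_of_lt hreg.aleph0_le
        ((card_qOcc_lt hreg).1 B' (hαB.qGood hgB)) hF) ws [w]
    have hw'B' : ¬ QOcc (ws, w') B' := fun h => hw' (Or.inl h)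
    have hw'F : (ws, w') ∉ F := fun h => hw' (Or.inr h)
    exact ⟨.qAbs ws w' (qSwap w' w ws B'),
      hαB.qAbs_qSwap hreg hgB hw'B' fun h => hw'w (by simp [h]),
      QBindersAvoidAbs.qAbs hw'F (hB'.qSwap_of_not_qOcc hw'B' hw'F)⟩

lemma QBindersAvoid.qSubst_qSwap {xs : varsort} {x y : var}
    {X : QTerm var varsort index bindex opsym}
    (h : QBindersAvoid {(xs, x), (xs, y)} X) (hf : QFresh xs y X) :
    QSubst X (.qVar xs y) x xs (qSwap y x xs X) := by
  refine QBindersAvoid.rec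
    (motive_1 := fun X _ => QFresh xs y X → QSubst X (.qVar xs y) x xs (qSwap y x xs X))
    (motive_2 := fun A _ => QFreshAbs xs y A → QSubstAbs A (.qVar xs y) x xs (qSwapAbs y x xs A))
    ?_ ?_ ?_ h hf
  · rintro ws w ⟨hwy⟩
    rw [qSwap_qVar]
    by_cases hwx : (ws, w) = (xs, x)
    · obtain ⟨rfl, rfl⟩ := Prod.mk.inj hwx
      simpa using QSubst.var_eq
    · by_cases hs : ws = xs
      · subst hs
        have hwy' : w ≠ y := fun h => hwy (h ▸ rfl)
        have hwx' : w ≠ x := fun h => hwx (h ▸ rfl)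
        simpa [Equiv.swap_apply_of_ne_of_ne hwy' hwx'] using QSubst.var_ne hwx
      · simpa [hs] using QSubst.var_ne hwx
  · rintro d inp binp - - hi hb (_ | ⟨hfi, hfb⟩)
    rw [qSwap_qOp]
    refine QSubst.op (fun i => by simp) (fun i X X' hX hX' => ?_) (fun j => by simp)
      (fun j A A' hA hA' => ?_)
    · rw [hX, Option.map_some, Option.some_inj] at hX'
      subst hX'
      exact hi i X hX (hfi i X hX)
    · rw [hA, Option.map_some, Option.some_inj] at hA'
      subst hA'
      exact hb j A hA (hfb j A hA)
  · intro ws w B hwF _ ih hfA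
    have hwx : (ws, w) ≠ (xs, x) := fun h => hwF (by simp [h])
    have hwy : (ws, w) ≠ (xs, y) := fun h => hwF (by simp [h])
    obtain (_ | ⟨hfB⟩) := hfA
    · exact absurd rfl hwy
    rw [qSwapAbs_qAbs]
    have hw : swapVarS var varsort xs ws y x w = w := by
      by_cases hs : ws = xs
      · subst hs
        simpa using Equiv.swap_apply_of_ne_of_ne (fun h => hwy (by rw [h]))
          (fun h => hwx (by rw [h]))
      · simp [hs]
    rw [hw]
    exact QSubstAbs.abs hwx (QFresh.qVar hwy) (ih hfB)

lemma trep_Var (xs : varsort) (y : var) :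
    trep (Var xs y : Term var varsort index bindex opsym) = .qVar xs y := by
  have hclass : ∀ {a b : QTerm var varsort index bindex opsym}, Relation.EqvGen Alpha a b →
      (a = .qVar xs y ↔ b = .qVar xs y) := by
    intro a b h
    induction h with
    | rel _ _ h => cases h <;> simp
    | refl => rfl
    | symm _ _ _ ih => exact ih.symm
    | trans _ _ _ _ _ ih1 ih2 => exact ih1.trans ih2
  exact (hclass (Quot.eqvGen_exact (Quot.out_eq _))).mpr rfl

lemma substRel_subst_Var (hreg : (Cardinal.mk var).IsRegular)
    {X : Term var varsort index bindex opsym} (hX : good X) {xs : varsort} {x y : var}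
    (hfr : fresh xs y X) : SubstRel X (Var xs y) x xs (subst X (Var xs y) x xs) := by
  have hF : Cardinal.mk ({(xs, x), (xs, y)} : Set (varsort × var)) < Cardinal.mk var :=
    (Set.toFinite _).lt_aleph0.trans_le hreg.aleph0_le
  obtain ⟨X', hα, hX'⟩ := (exists_alpha_qBindersAvoid hreg hF).1 (trep X) hX
  have hex : ∃ Z, SubstRel X (Var xs y) x xs Z :=
    ⟨_, X', _, (Quot.sound hα).symm.trans (Quot.out_eq X), rfl,
      trep_Var xs y ▸ hX'.qSubst_qSwap (hα.qFresh hfr)⟩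
  rw [subst, dif_pos hex]
  exact hex.choose_spec

/-- the bound variable of an abstraction can be renamed, via
substitution, to any variable fresh for the body. -/
theorem abs_rename (hinf : Cardinal.aleph0 ≤ Cardinal.mk var)
    (hreg : (Cardinal.mk var).IsRegular)
    (X : Term var varsort index bindex opsym) (hX : good X)
    (xs : varsort) (x y : var) (hfr : fresh xs y X) :
    Abs xs x X = Abs xs y (subst X (Var xs y) x xs) := by
  obtain ⟨qX, qZ, rfl, hqZ, hsub⟩ := substRel_subst_Var hreg hX (x := x) hfr
  rw [trep_Var] at hsub
  have hgood : QGood qX := good_tmk_iff.mp hX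
  have hfresh : QFresh xs y qX := fresh_tmk_iff.mp hfr
  obtain rfl := hsub.eq_qSwap y rfl hfresh
  rw [← hqZ, Abs_tmk hreg hgood, Abs_tmk hreg (qGood_qSwap hgood y x xs)]
  rcases eq_or_ne x y with rfl | hxy
  · rw [qSwap_self]
  · exact Quot.sound <| (hgood.alpha_refl hreg).qAbs_qSwap hreg hgood
      (hsub.not_qOcc y rfl hfresh hxy) hxy

end Binding
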